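/- arXiv:2506.01356 — 3 statements merged into one kernel-verified Lean document; each statement's English description precedes it below -/
import Mathlib

section
/- Let f : ℝⁿ → ℝⁿ be locally Lipschitz with f(0)=0, let Ω ⊆ ℝⁿ be a compact set with nonempty interior containing 0 whose boundary is C¹, and let V : ℝⁿ → ℝ be continuously differentiable. Fix 0 < c₁ < c₂. Suppose: (i) for all x with c₁ ≤ V(x) ≤ c₂ and x ∈ Ω, ⟪∇V(x), f(x)⟫ < 0; (ii) for all x ∈ ∂Ω with V(x) ≤ c₂, ⟪f(x), n(x)⟫ < 0 where n(x) is the outer unit normal of ∂Ω at x. Then the set {x ∈ Ω : V(x) ≤ c₂} is forward invariant under the flow of ẋ = f(x). -/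
/-!
The set `{x ∈ Ω : V x ≤ c₂}` is the intersection of the sublevel sets `{ρ ≤ 0}` and `{V ≤ c₂}`.
Along a trajectory, `ρ ∘ φ` and `V ∘ φ` can only reach their bounding level with strictly
negative derivative: on `{ρ = 0}` the field points inward, and on `{V = c₂}` the Lyapunov
derivative is negative. So neither function can cross its level, and a continuous induction on
`[0, t]` keeps the trajectory in the set.
-/

open Set Filter Topology

theorem HasGradientAt.comp_hasDerivAt {E : Type*} [NormedAddCommGroup E]
    [InnerProductSpace ℝ E] [CompleteSpace E] {F : E → ℝ} {F' : E} {φ : ℝ → E} {φ' : E}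
    {t : ℝ} (hF : HasGradientAt F F' (φ t)) (hφ : HasDerivAt φ φ' t) :
    HasDerivAt (F ∘ φ) (inner ℝ F' φ') t :=
  hF.hasFDerivAt.comp_hasDerivAt t hφ

theorem HasDerivAt.eventually_nhdsGT_lt {g : ℝ → ℝ} {g' T : ℝ} (hg : HasDerivAt g g' T)
    (hneg : g' < 0) : ∀ᶠ s in 𝓝[>] T, g s < g T := by
  have hslope : ∀ᶠ s in 𝓝[>] T, slope g T s < 0 :=
    ((hasDerivWithinAt_iff_tendsto_slope' (lt_irrefl T)).1
      hg.hasDerivWithinAt).eventually_lt_const hneg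
  filter_upwards [hslope, self_mem_nhdsWithin] with s hs hTs
  rw [slope_def_field, div_eq_mul_inv] at hs
  exact sub_neg.1 (neg_of_mul_neg_left hs (inv_nonneg.2 (sub_nonneg.2 (le_of_lt hTs))))

theorem HasDerivAt.eventually_nhdsGT_le {g : ℝ → ℝ} {g' c T : ℝ} (hg : HasDerivAt g g' T)
    (hle : g T ≤ c) (hneg : g T = c → g' < 0) : ∀ᶠ s in 𝓝[>] T, g s ≤ c := by
  rcases hle.lt_or_eq with hlt | heq
  · exact (eventually_nhdsWithin_of_eventually_nhds
      (hg.continuousAt.eventually_lt_const hlt)).mono fun _ => le_of_lt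
  · exact (hg.eventually_nhdsGT_lt (hneg heq)).mono fun _ hs => heq ▸ hs.le

theorem forall_ge_le_and_le_of_hasDerivAt {u v u' v' : ℝ → ℝ} {a b t₀ : ℝ}
    (hu : ∀ t, HasDerivAt u (u' t) t) (hv : ∀ t, HasDerivAt v (v' t) t)
    (hu_bd : ∀ t, u t = a → v t ≤ b → u' t < 0) (hv_bd : ∀ t, u t ≤ a → v t = b → v' t < 0)
    (h₀ : u t₀ ≤ a ∧ v t₀ ≤ b) : ∀ t ≥ t₀, u t ≤ a ∧ v t ≤ b := by
  have hu_cont : Continuous u := continuous_iff_continuousAt.2 fun t => (hu t).continuousAt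
  have hv_cont : Continuous v := continuous_iff_continuousAt.2 fun t => (hv t).continuousAt
  intro t ht
  have hclosed : IsClosed ({s | u s ≤ a ∧ v s ≤ b} ∩ Icc t₀ t) :=
    ((isClosed_le hu_cont continuous_const).inter
      (isClosed_le hv_cont continuous_const)).inter isClosed_Icc
  refine hclosed.Icc_subset_of_forall_mem_nhdsWithin h₀ (fun s ⟨hs, _⟩ => ?_) ⟨ht, le_rfl⟩
  exact ((hu s).eventually_nhdsGT_le hs.1 (hu_bd s · hs.2)).and
    ((hv s).eventually_nhdsGT_le hs.2 (hv_bd s hs.1 ·))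

theorem stmt_1_general {n : ℕ} (f : EuclideanSpace ℝ (Fin n) → EuclideanSpace ℝ (Fin n))
    (Ω : Set (EuclideanSpace ℝ (Fin n)))
    -- C¹ boundary: Ω is the sublevel set of a C¹ defining function ρ with
    -- nonvanishing gradient on the boundary, and `nrm` is the outer unit normal.
    (ρ : EuclideanSpace ℝ (Fin n) → ℝ) (hρ : ContDiff ℝ 1 ρ)
    (hΩρ : Ω = {x | ρ x ≤ 0}) (hbdry : frontier Ω = {x | ρ x = 0})
    (nrm : EuclideanSpace ℝ (Fin n) → EuclideanSpace ℝ (Fin n))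
    (hnrm : ∀ x ∈ frontier Ω, nrm x = ‖gradient ρ x‖⁻¹ • gradient ρ x)
    (V : EuclideanSpace ℝ (Fin n) → ℝ) (hV : ContDiff ℝ 1 V)
    (c₁ c₂ : ℝ) (hc₁₂ : c₁ < c₂)
    -- (i) Lyapunov decrease on the band
    (hband : ∀ x ∈ Ω, c₁ ≤ V x → V x ≤ c₂ → (inner ℝ (gradient V x) (f x) : ℝ) < 0)
    -- (ii) inward-pointing vector field on the boundary
    (hin : ∀ x ∈ frontier Ω, V x ≤ c₂ → (inner ℝ (f x) (nrm x) : ℝ) < 0) :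
    -- conclusion: {x ∈ Ω : V x ≤ c₂} is forward invariant
    ∀ φ : ℝ → EuclideanSpace ℝ (Fin n), (∀ t, HasDerivAt φ (f (φ t)) t) →
      φ 0 ∈ Ω → V (φ 0) ≤ c₂ → ∀ t ≥ 0, φ t ∈ Ω ∧ V (φ t) ≤ c₂ := by
  intro φ hφ h0 hV0
  subst hΩρ
  have hρ_inward : ∀ x, ρ x = 0 → V x ≤ c₂ → inner ℝ (gradient ρ x) (f x) < 0 := by
    intro x hx hVx
    have hfr : x ∈ frontier {x | ρ x ≤ 0} := hbdry ▸ hx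
    have h := hin x hfr hVx
    rw [hnrm x hfr, real_inner_smul_right, real_inner_comm] at h
    exact neg_of_mul_neg_right h (inv_nonneg.2 (norm_nonneg _))
  have hV_decrease : ∀ x, ρ x ≤ 0 → V x = c₂ → inner ℝ (gradient V x) (f x) < 0 :=
    fun x hx hVx => hband x hx (hVx ▸ hc₁₂.le) hVx.le
  exact forall_ge_le_and_le_of_hasDerivAt
    (fun t => ((hρ.differentiable one_ne_zero _).hasGradientAt).comp_hasDerivAt (hφ t))
    (fun t => ((hV.differentiable one_ne_zero _).hasGradientAt).comp_hasDerivAt (hφ t))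
    (fun t => hρ_inward (φ t)) (fun t => hV_decrease (φ t)) ⟨h0, hV0⟩

/-- Forward invariance part of Theorem 3.2: if the Lyapunov derivative is negative on the
band `{x ∈ Ω : c₁ ≤ V x ≤ c₂}` and the vector field points strictly inward on
`∂Ω ∩ {V ≤ c₂}` (where `Ω` is a compact set with nonempty interior, containing `0`,
with C¹ boundary described by a defining function `ρ` whose normalized gradient is the
outer unit normal `nrm`), then `{x ∈ Ω : V x ≤ c₂}` is forward invariant for `ẋ = f(x)`. -/
theorem stmt_1 {n : ℕ} (f : EuclideanSpace ℝ (Fin n) → EuclideanSpace ℝ (Fin n))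
    (hf : LocallyLipschitz f) (hf0 : f 0 = 0)
    (Ω : Set (EuclideanSpace ℝ (Fin n))) (hΩc : IsCompact Ω)
    (hΩint : (interior Ω).Nonempty) (h0Ω : (0 : EuclideanSpace ℝ (Fin n)) ∈ Ω)
    -- C¹ boundary: Ω is the sublevel set of a C¹ defining function ρ with
    -- nonvanishing gradient on the boundary, and `nrm` is the outer unit normal.
    (ρ : EuclideanSpace ℝ (Fin n) → ℝ) (hρ : ContDiff ℝ 1 ρ)
    (hΩρ : Ω = {x | ρ x ≤ 0}) (hbdry : frontier Ω = {x | ρ x = 0})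
    (hgradρ : ∀ x ∈ frontier Ω, gradient ρ x ≠ 0)
    (nrm : EuclideanSpace ℝ (Fin n) → EuclideanSpace ℝ (Fin n))
    (hnrm : ∀ x ∈ frontier Ω, nrm x = ‖gradient ρ x‖⁻¹ • gradient ρ x)
    (V : EuclideanSpace ℝ (Fin n) → ℝ) (hV : ContDiff ℝ 1 V)
    (c₁ c₂ : ℝ) (hc₁ : 0 < c₁) (hc₁₂ : c₁ < c₂)
    -- (i) Lyapunov decrease on the band
    (hband : ∀ x ∈ Ω, c₁ ≤ V x → V x ≤ c₂ → (inner ℝ (gradient V x) (f x) : ℝ) < 0)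
    -- (ii) inward-pointing vector field on the boundary
    (hin : ∀ x ∈ frontier Ω, V x ≤ c₂ → (inner ℝ (f x) (nrm x) : ℝ) < 0) :
    -- conclusion: {x ∈ Ω : V x ≤ c₂} is forward invariant
    ∀ φ : ℝ → EuclideanSpace ℝ (Fin n), (∀ t, HasDerivAt φ (f (φ t)) t) →
      φ 0 ∈ Ω → V (φ 0) ≤ c₂ → ∀ t ≥ 0, φ t ∈ Ω ∧ V (φ t) ≤ c₂ :=
  stmt_1_general f Ω ρ hρ hΩρ hbdry nrm hnrm V hV c₁ c₂ hc₁₂ hband hin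
end

section
/- Under the hypotheses of the previous forward-invariance theorem (Lyapunov decrease in the band {x ∈ Ω : c₁ ≤ V(x) ≤ c₂} and inward-pointing vector field on ∂Ω ∩ V^{≤c₂}, with Ω compact), every trajectory starting in {x ∈ Ω : V(x) ≤ c₂} enters the smaller sublevel set {x ∈ Ω : V(x) ≤ c₁} in finite time: there exists T ≥ 0 with V(φ(T, x₀)) ≤ c₁. -/
/-!
Suppose a trajectory never reaches `{V ≤ c₁}`. Forward invariance of `{x ∈ Ω : V x ≤ c₂}` is a
continuous induction in time: at a time where the trajectory sits on `∂Ω` or on the level set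
`V = c₂`, `ρ` resp. `V` has negative derivative along the trajectory, so the trajectory stays
in the set for a short while. Hence it stays in the compact band
`{x ∈ Ω : c₁ ≤ V x ≤ c₂}`, where the continuous function `⟪∇V, f⟫` is bounded above by some
`-δ < 0`. Then `V` drops by at least `δ t` by time `t`, and after time `(c₂ - c₁) / δ` it is at
most `c₁`, a contradiction.
-/

open Filter Set Topology InnerProductSpace
open scoped RealInnerProductSpace

lemma HasDerivAt.eventually_lt_nhdsGT {g : ℝ → ℝ} {d t : ℝ} (hg : HasDerivAt g d t)
    (hd : d < 0) : ∀ᶠ s in 𝓝[>] t, g s < g t := by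
  filter_upwards [hg.hasDerivWithinAt.limsup_slope_le' (lt_irrefl t) hd,
    self_mem_nhdsWithin] with s hslope (hts : t < s)
  rw [slope_def_field, div_neg_iff] at hslope
  rcases hslope with ⟨-, h⟩ | ⟨h, -⟩ <;> linarith

lemma HasDerivAt.eventually_le_nhdsGT {g : ℝ → ℝ} {d t c : ℝ} (hg : HasDerivAt g d t)
    (hgt : g t ≤ c) (hd : g t = c → d < 0) : ∀ᶠ s in 𝓝[>] t, g s ≤ c := by
  rcases hgt.lt_or_eq with hlt | heq
  · exact nhdsWithin_le_nhds <|
      (hg.continuousAt.eventually_lt_const hlt).mono fun _ hs => hs.le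
  · exact (hg.eventually_lt_nhdsGT (hd heq)).mono fun _ hs => (hs.trans_eq heq).le

lemma IsCompact.exists_pos_forall_le_neg {X : Type*} [TopologicalSpace X] {K : Set X}
    (hK : IsCompact K) (hne : K.Nonempty) {F : X → ℝ} (hF : ContinuousOn F K)
    (hneg : ∀ x ∈ K, F x < 0) :
    ∃ δ > 0, ∀ x ∈ K, F x ≤ -δ := by
  obtain ⟨x₀, hx₀, hmax⟩ := hK.exists_isMaxOn hne hF
  exact ⟨-F x₀, neg_pos.2 (hneg x₀ hx₀), fun x hx => (neg_neg (F x₀)).symm ▸ hmax hx⟩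

variable {E : Type*} [NormedAddCommGroup E] [InnerProductSpace ℝ E] [CompleteSpace E]

lemma DifferentiableAt.hasDerivAt_inner_gradient_comp {V : E → ℝ} {φ : ℝ → E} {v : E} {t : ℝ}
    (hV : DifferentiableAt ℝ V (φ t)) (hφ : HasDerivAt φ v t) :
    HasDerivAt (fun s => V (φ s)) ⟪gradient V (φ t), v⟫_ℝ t := by
  rw [inner_gradient_left]
  exact hV.hasFDerivAt.comp_hasDerivAt t hφ

lemma ContDiff.continuous_gradient {V : E → ℝ} (hV : ContDiff ℝ 1 V) :
    Continuous (gradient V) :=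
  (toDual ℝ E).symm.continuous.comp (hV.continuous_fderiv one_ne_zero)

lemma eventually_mem_nhdsGT_of_inner_gradient_neg {Ω : Set E} {ρ : E → ℝ}
    (hρ : ContDiff ℝ 1 ρ) (hΩρ : Ω = {x | ρ x ≤ 0}) {φ : ℝ → E} {v : E} {t : ℝ}
    (hφ : HasDerivAt φ v t) (hmem : φ t ∈ Ω)
    (hin : φ t ∈ frontier Ω → ⟪gradient ρ (φ t), v⟫_ℝ < 0) :
    ∀ᶠ s in 𝓝[>] t, φ s ∈ Ω := by
  by_cases hint : φ t ∈ interior Ω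
  · exact nhdsWithin_le_nhds <| hφ.continuousAt.eventually_mem (mem_interior_iff_mem_nhds.1 hint)
  · have hfr : φ t ∈ frontier Ω := ⟨subset_closure hmem, hint⟩
    subst hΩρ
    exact ((hρ.differentiable one_ne_zero _).hasDerivAt_inner_gradient_comp hφ).eventually_le_nhdsGT
      hmem fun _ => hin hfr

theorem forall_mem_inter_sublevel_of_inner_gradient_neg {f : E → E} {Ω : Set E} {ρ V : E → ℝ}
    {c : ℝ} (hρ : ContDiff ℝ 1 ρ) (hΩρ : Ω = {x | ρ x ≤ 0}) (hV : ContDiff ℝ 1 V)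
    (hin : ∀ x ∈ frontier Ω, V x ≤ c → ⟪gradient ρ x, f x⟫_ℝ < 0)
    (hlevel : ∀ x ∈ Ω, V x = c → ⟪gradient V x, f x⟫_ℝ < 0)
    {φ : ℝ → E} (hφ : ∀ t, HasDerivAt φ (f (φ t)) t) (hφΩ : φ 0 ∈ Ω) (hφV : V (φ 0) ≤ c)
    {T : ℝ} (hT : 0 ≤ T) : φ T ∈ Ω ∧ V (φ T) ≤ c := by
  have hφc : Continuous φ := continuous_iff_continuousAt.2 fun t => (hφ t).continuousAt
  set S : Set ℝ := {t | φ t ∈ Ω ∧ V (φ t) ≤ c}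
  have hS : IsClosed S :=
    ((hΩρ ▸ isClosed_le hρ.continuous continuous_const).preimage hφc).inter
      (isClosed_le (hV.continuous.comp hφc) continuous_const)
  have hstep : ∀ t ∈ S, S ∈ 𝓝[>] t := fun t ⟨htΩ, htV⟩ =>
    (eventually_mem_nhdsGT_of_inner_gradient_neg hρ hΩρ (hφ t) htΩ fun hfr => hin _ hfr htV).and
      (((hV.differentiable one_ne_zero _).hasDerivAt_inner_gradient_comp
        (hφ t)).eventually_le_nhdsGT htV (hlevel _ htΩ))
  exact (hS.inter isClosed_Icc).Icc_subset_of_forall_mem_nhdsWithin ⟨hφΩ, hφV⟩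
    (fun t ht => hstep t ht.1) ⟨hT, le_rfl⟩

theorem exists_pos_forall_le_sub_mul_of_forall_mem {f : E → E} (hf : Continuous f) {V : E → ℝ}
    (hV : ContDiff ℝ 1 V) {K : Set E} (hK : IsCompact K)
    (hneg : ∀ x ∈ K, ⟪gradient V x, f x⟫_ℝ < 0) {φ : ℝ → E}
    (hφ : ∀ t, HasDerivAt φ (f (φ t)) t) (hφK : ∀ t ≥ 0, φ t ∈ K) :
    ∃ δ > 0, ∀ t ≥ 0, V (φ t) ≤ V (φ 0) - δ * t := by
  obtain ⟨δ, hδ, hle⟩ := hK.exists_pos_forall_le_neg ⟨_, hφK 0 le_rfl⟩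
    (hV.continuous_gradient.inner hf).continuousOn hneg
  have hVφ : ∀ t, HasDerivAt (fun s => V (φ s)) ⟪gradient V (φ t), f (φ t)⟫_ℝ t := fun t =>
    (hV.differentiable one_ne_zero _).hasDerivAt_inner_gradient_comp (hφ t)
  refine ⟨δ, hδ, fun t ht => ?_⟩
  have := (convex_Ici 0).image_sub_le_mul_sub_of_deriv_le
    (fun s _ => (hVφ s).continuousAt.continuousWithinAt)
    (fun s _ => (hVφ s).differentiableAt.differentiableWithinAt)
    (fun s hs => (hVφ s).deriv ▸ hle _ (hφK s (interior_subset hs))) 0 le_rfl t ht ht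
  linarith

theorem stmt_2_general {n : ℕ} (f : EuclideanSpace ℝ (Fin n) → EuclideanSpace ℝ (Fin n))
    (hf : LocallyLipschitz f)
    (Ω : Set (EuclideanSpace ℝ (Fin n))) (hΩc : IsCompact Ω)
    -- C¹ boundary: Ω is the sublevel set of a C¹ defining function ρ with
    -- nonvanishing gradient on the boundary, and `nrm` is the outer unit normal.
    (ρ : EuclideanSpace ℝ (Fin n) → ℝ) (hρ : ContDiff ℝ 1 ρ)
    (hΩρ : Ω = {x | ρ x ≤ 0})
    (nrm : EuclideanSpace ℝ (Fin n) → EuclideanSpace ℝ (Fin n))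
    (hnrm : ∀ x ∈ frontier Ω, nrm x = ‖gradient ρ x‖⁻¹ • gradient ρ x)
    (V : EuclideanSpace ℝ (Fin n) → ℝ) (hV : ContDiff ℝ 1 V)
    (c₁ c₂ : ℝ)
    -- (i) Lyapunov decrease on the band
    (hband : ∀ x ∈ Ω, c₁ ≤ V x → V x ≤ c₂ → (inner ℝ (gradient V x) (f x) : ℝ) < 0)
    -- (ii) inward-pointing vector field on the boundary
    (hin : ∀ x ∈ frontier Ω, V x ≤ c₂ → (inner ℝ (f x) (nrm x) : ℝ) < 0) :
    -- conclusion: every trajectory starting in {x ∈ Ω : V x ≤ c₂} enters {V ≤ c₁}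
    -- in finite time
    ∀ φ : ℝ → EuclideanSpace ℝ (Fin n), (∀ t, HasDerivAt φ (f (φ t)) t) →
      φ 0 ∈ Ω → V (φ 0) ≤ c₂ → ∃ T ≥ (0:ℝ), V (φ T) ≤ c₁ := by
  intro φ hφ hφΩ hφV
  by_contra! hcon
  have hc₁₂ : c₁ ≤ c₂ := ((hcon 0 le_rfl).trans_le hφV).le
  have hinward : ∀ x ∈ frontier Ω, V x ≤ c₂ → ⟪gradient ρ x, f x⟫_ℝ < 0 := fun x hx hVx => by
    have h := hin x hx hVx
    rw [hnrm x hx, real_inner_smul_right] at h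
    exact real_inner_comm (f x) _ ▸ neg_of_mul_neg_right h (inv_nonneg.2 (norm_nonneg _))
  have hinv : ∀ t ≥ 0, φ t ∈ Ω ∧ V (φ t) ≤ c₂ := fun t ht =>
    forall_mem_inter_sublevel_of_inner_gradient_neg hρ hΩρ hV hinward
      (fun x hx hVx => hband x hx (hVx ▸ hc₁₂) hVx.le) hφ hφΩ hφV ht
  obtain ⟨δ, hδ, hdecay⟩ := exists_pos_forall_le_sub_mul_of_forall_mem hf.continuous hV
    (hΩc.inter_right (isClosed_Icc.preimage hV.continuous))
    (fun x hx => hband x hx.1 hx.2.1 hx.2.2) hφ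
    (fun t ht => ⟨(hinv t ht).1, (hcon t ht).le, (hinv t ht).2⟩)
  have hT : 0 ≤ (c₂ - c₁) / δ := div_nonneg (sub_nonneg.2 hc₁₂) hδ.le
  have hVT := hdecay _ hT
  rw [mul_div_cancel₀ _ hδ.ne'] at hVT
  linarith [hcon _ hT]

/-- Finite-time entry part of Theorem 3.2: if the Lyapunov derivative is negative on the
band `{x ∈ Ω : c₁ ≤ V x ≤ c₂}` and the vector field points strictly inward on
`∂Ω ∩ {V ≤ c₂}` (where `Ω` is a compact set with nonempty interior, containing `0`,
with C¹ boundary described by a defining function `ρ` whose normalized gradient is the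
outer unit normal `nrm`), then `{x ∈ Ω : V x ≤ c₂}` is forward invariant for `ẋ = f(x)`. -/
theorem stmt_2 {n : ℕ} (f : EuclideanSpace ℝ (Fin n) → EuclideanSpace ℝ (Fin n))
    (hf : LocallyLipschitz f) (hf0 : f 0 = 0)
    (Ω : Set (EuclideanSpace ℝ (Fin n))) (hΩc : IsCompact Ω)
    (hΩint : (interior Ω).Nonempty) (h0Ω : (0 : EuclideanSpace ℝ (Fin n)) ∈ Ω)
    -- C¹ boundary: Ω is the sublevel set of a C¹ defining function ρ with
    -- nonvanishing gradient on the boundary, and `nrm` is the outer unit normal.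
    (ρ : EuclideanSpace ℝ (Fin n) → ℝ) (hρ : ContDiff ℝ 1 ρ)
    (hΩρ : Ω = {x | ρ x ≤ 0}) (hbdry : frontier Ω = {x | ρ x = 0})
    (hgradρ : ∀ x ∈ frontier Ω, gradient ρ x ≠ 0)
    (nrm : EuclideanSpace ℝ (Fin n) → EuclideanSpace ℝ (Fin n))
    (hnrm : ∀ x ∈ frontier Ω, nrm x = ‖gradient ρ x‖⁻¹ • gradient ρ x)
    (V : EuclideanSpace ℝ (Fin n) → ℝ) (hV : ContDiff ℝ 1 V)
    (c₁ c₂ : ℝ) (hc₁ : 0 < c₁) (hc₁₂ : c₁ < c₂)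
    -- (i) Lyapunov decrease on the band
    (hband : ∀ x ∈ Ω, c₁ ≤ V x → V x ≤ c₂ → (inner ℝ (gradient V x) (f x) : ℝ) < 0)
    -- (ii) inward-pointing vector field on the boundary
    (hin : ∀ x ∈ frontier Ω, V x ≤ c₂ → (inner ℝ (f x) (nrm x) : ℝ) < 0) :
    -- conclusion: every trajectory starting in {x ∈ Ω : V x ≤ c₂} enters {V ≤ c₁}
    -- in finite time
    ∀ φ : ℝ → EuclideanSpace ℝ (Fin n), (∀ t, HasDerivAt φ (f (φ t)) t) →
      φ 0 ∈ Ω → V (φ 0) ≤ c₂ → ∃ T ≥ (0:ℝ), V (φ T) ≤ c₁ :=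
  stmt_2_general f hf Ω hΩc ρ hρ hΩρ nrm hnrm V hV c₁ c₂ hband hin
end

section
/- Let V : ℝⁿ → [0, ∞] and define W(x) = tanh(a·V(x)) for a > 0 with the convention W(x) = 1 when V(x) = ∞. Suppose V is differentiable at x with V(x) < ∞ and, along the flow of ẋ = f(x), ⟪∇V(x), f(x)⟫ = -‖x‖^p. Then W satisfies the Zubov-type PDE ⟪∇W(x), f(x)⟫ = -a(1 + W(x))(1 - W(x))‖x‖^p. -/
theorem Real.hasDerivAt_tanh (x : ℝ) : HasDerivAt Real.tanh (1 - Real.tanh x ^ 2) x := by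
  have hcosh : Real.cosh x ≠ 0 := (Real.cosh_pos x).ne'
  have h := (Real.hasDerivAt_sinh x).div (Real.hasDerivAt_cosh x) hcosh
  rw [show Real.sinh / Real.cosh = Real.tanh from
    funext fun y => (Real.tanh_eq_sinh_div_cosh y).symm] at h
  refine h.congr_deriv ?_
  rw [Real.tanh_eq_sinh_div_cosh]
  field_simp

theorem HasDerivAt.comp_hasGradientAt {E : Type*} [NormedAddCommGroup E] [InnerProductSpace ℝ E]
    [CompleteSpace E] {g : ℝ → ℝ} {g' : ℝ} {f : E → ℝ} {f' : E} {x : E}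
    (hg : HasDerivAt g g' (f x)) (hf : HasGradientAt f f' x) :
    HasGradientAt (g ∘ f) (g' • f') x := by
  rw [hasGradientAt_iff_hasFDerivAt, map_smulₛₗ] at *
  exact hg.comp_hasFDerivAt x hf

theorem stmt_6_general {n : ℕ} (f : EuclideanSpace ℝ (Fin n) → EuclideanSpace ℝ (Fin n))
    (V : EuclideanSpace ℝ (Fin n) → ℝ) (a p : ℝ)
    (W : EuclideanSpace ℝ (Fin n) → ℝ) (hWdef : ∀ y, W y = Real.tanh (a * V y))
    (x : EuclideanSpace ℝ (Fin n))
    (hVdiff : DifferentiableAt ℝ V x)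
    (hVpde : (inner ℝ (gradient V x) (f x) : ℝ) = -‖x‖ ^ p) :
    (inner ℝ (gradient W x) (f x) : ℝ) = -a * (1 + W x) * (1 - W x) * ‖x‖ ^ p := by
  have hscaled :
      HasDerivAt (fun s => Real.tanh (a * s)) ((1 - Real.tanh (a * V x) ^ 2) * a) (V x) :=
    (Real.hasDerivAt_tanh _).comp (V x) (hasDerivAt_const_mul a)
  have hgrad : gradient W x = ((1 - Real.tanh (a * V x) ^ 2) * a) • gradient V x := by
    rw [show W = (fun s => Real.tanh (a * s)) ∘ V from funext hWdef]
    exact (hscaled.comp_hasGradientAt hVdiff.hasGradientAt).gradient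
  rw [hgrad, real_inner_smul_left, hVpde, hWdef]
  ring

/-- Concrete Zubov PDE (Theorem 2.4): if `V` is differentiable at `x` (with finite value)
and `⟪∇V(x), f(x)⟫ = -‖x‖^p`, then `W = tanh (a·V)` satisfies
`⟪∇W(x), f(x)⟫ = -a (1 + W x)(1 - W x) ‖x‖^p`. -/
theorem stmt_6 {n : ℕ} (f : EuclideanSpace ℝ (Fin n) → EuclideanSpace ℝ (Fin n))
    (V : EuclideanSpace ℝ (Fin n) → ℝ) (a p : ℝ) (ha : 0 < a)
    (W : EuclideanSpace ℝ (Fin n) → ℝ) (hWdef : ∀ y, W y = Real.tanh (a * V y))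
    (x : EuclideanSpace ℝ (Fin n))
    (hVdiff : DifferentiableAt ℝ V x)
    (hVpde : (inner ℝ (gradient V x) (f x) : ℝ) = -‖x‖ ^ p) :
    (inner ℝ (gradient W x) (f x) : ℝ) = -a * (1 + W x) * (1 - W x) * ‖x‖ ^ p :=
  stmt_6_general f V a p W hWdef x hVdiff hVpde
end
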